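/- arXiv:2304.00469 — 5 statements merged into one kernel-verified Lean document; each statement's English description precedes it below -/
import Mathlib

section
/- Let G be a group, N a normal subgroup of G, and γ ∈ G such that G is generated by N ∪ {γ}. Let ρ : G → SL₂(ℂ) be a group homomorphism with tr(ρ(γ)) = 2 or tr(ρ(γ)) = −2. If ρ is irreducible, then the restriction of ρ to N is irreducible. -/
/-- A homomorphism `ρ : G → SL₂(ℂ)` is irreducible if no one-dimensional ℂ-subspace
`L ⊆ ℂ²` satisfies `ρ(g)L = L` for all `g ∈ G`. -/
def IsIrreducibleRep {G : Type*} [Group G]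
    (ρ : G →* Matrix.SpecialLinearGroup (Fin 2) ℂ) : Prop :=
  ¬ ∃ L : Submodule ℂ (Fin 2 → ℂ), Module.finrank ℂ L = 1 ∧
      ∀ g : G, Submodule.map (Matrix.toLin' ((ρ g : Matrix (Fin 2) (Fin 2) ℂ))) L = L

/-!
An `N`-invariant line `p` that `ρ γ` moves yields, by normality of `N`, three `N`-invariant
lines `p`, `γ p`, `γ² p`. They are distinct: Cayley–Hamilton gives `γ² v = tr(γ) γ v - v`, and
`tr γ ≠ 0`. An element of `SL₂(ℂ)` fixing three points of `ℙ¹` is scalar, so `ρ(N)` acts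
trivially on `ℙ¹`; an eigenline of `ρ γ` is then fixed by `N` and `γ`, hence by all of `G`.
-/

open Matrix Module Projectivization
open scoped LinearAlgebra.Projectivization

namespace Module.End

variable {K V : Type*} [Field K] [AddCommGroup V] [Module K V]

theorem eq_smul_one_of_linearIndependent_eigenvectors (hV : finrank K V = 2)
    {f : End K V} {u v : V} {a : K} (huv : LinearIndependent K ![u, v])
    (hu : f u = a • u) (hv : f v = a • v) : f = a • 1 := by
  let b := basisOfLinearIndependentOfCardEqFinrank huv (by simp [hV])
  refine b.ext fun i => ?_
  fin_cases i <;> simp [b, hu, hv]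

theorem exists_eq_smul_one_of_three_eigenvectors (hV : finrank K V = 2)
    {f : End K V} {u v w : V} {a b c : K} (huv : LinearIndependent K ![u, v])
    (huw : LinearIndependent K ![u, w]) (hvw : LinearIndependent K ![v, w])
    (hu : f u = a • u) (hv : f v = b • v) (hw : f w = c • w) : ∃ r : K, f = r • 1 := by
  by_cases hab : a = b
  · exact ⟨a, f.eq_smul_one_of_linearIndependent_eigenvectors hV huv hu (hab ▸ hv)⟩
  by_cases hac : a = c
  · exact ⟨a, f.eq_smul_one_of_linearIndependent_eigenvectors hV huw hu (hac ▸ hw)⟩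
  by_cases hbc : b = c
  · exact ⟨b, f.eq_smul_one_of_linearIndependent_eigenvectors hV hvw hv (hbc ▸ hw)⟩
  have hinj : Function.Injective ![a, b, c] := by
    intro i j
    fin_cases i <;> fin_cases j <;> simp [hab, hac, hbc, Ne.symm hab, Ne.symm hac, Ne.symm hbc]
  have heigen : ∀ i, f.HasEigenvector (![a, b, c] i) (![u, v, w] i) := by
    intro i
    fin_cases i
    · exact ⟨mem_eigenspace_iff.2 hu, huv.ne_zero 0⟩
    · exact ⟨mem_eigenspace_iff.2 hv, huv.ne_zero 1⟩
    · exact ⟨mem_eigenspace_iff.2 hw, huw.ne_zero 1⟩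
  have : FiniteDimensional K V := Module.finite_of_finrank_eq_succ hV
  have := (f.eigenvectors_linearIndependent' _ hinj _ heigen).fintype_card_le_finrank
  simp [hV] at this

end Module.End

namespace Projectivization

variable {G K V : Type*} [Field K] [AddCommGroup V] [Module K V]
  [Group G] [DistribMulAction G V] [SMulCommClass G K V]

theorem smul_mk_eq_mk_iff (g : G) {v : V} (hv : v ≠ 0) :
    g • mk K v hv = mk K v hv ↔ ∃ a : K, a • v = g • v := by
  rw [smul_mk, mk_eq_mk_iff']

theorem exists_smul_eq_self [IsAlgClosed K] [FiniteDimensional K V] [Nontrivial V] (g : G) :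
    ∃ p : ℙ K V, g • p = p := by
  obtain ⟨μ, hμ⟩ := Module.End.exists_eigenvalue (DistribSMul.toLinearMap K V g)
  obtain ⟨v, hv⟩ := hμ.exists_hasEigenvector
  exact ⟨mk K v hv.2, (smul_mk_eq_mk_iff g hv.2).2 ⟨μ, hv.apply_eq_smul.symm⟩⟩

theorem smul_eq_self_of_three_fixed_points (hV : finrank K V = 2) {g : G} {p q r : ℙ K V}
    (hpq : p ≠ q) (hpr : p ≠ r) (hqr : q ≠ r) (hp : g • p = p) (hq : g • q = q)
    (hr : g • r = r) (x : ℙ K V) : g • x = x := by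
  have eigen (y : ℙ K V) (hy : g • y = y) :
      ∃ a : K, DistribSMul.toLinearMap K V g y.rep = a • y.rep := by
    rw [← mk_rep y, smul_mk_eq_mk_iff] at hy
    obtain ⟨a, ha⟩ := hy
    exact ⟨a, ha.symm⟩
  obtain ⟨a, ha⟩ := eigen p hp
  obtain ⟨b, hb⟩ := eigen q hq
  obtain ⟨c, hc⟩ := eigen r hr
  obtain ⟨s, hs⟩ := End.exists_eq_smul_one_of_three_eigenvectors hV
    (linearIndependent_pair_iff_ne.2 hpq) (linearIndependent_pair_iff_ne.2 hpr)
    (linearIndependent_pair_iff_ne.2 hqr) ha hb hc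
  induction x using Projectivization.ind with
  | h v hv => exact (smul_mk_eq_mk_iff g hv).2 ⟨s, by simpa using (LinearMap.congr_fun hs v).symm⟩

end Projectivization

namespace Matrix

theorem mul_self_fin_two {R : Type*} [CommRing R] (A : Matrix (Fin 2) (Fin 2) R) :
    A * A = A.trace • A - A.det • 1 := by
  nontriviality R
  have := aeval_self_charpoly A
  rw [charpoly_fin_two] at this
  simp only [map_add, map_sub, map_mul, sq, Polynomial.aeval_X, Polynomial.aeval_C,
    Algebra.algebraMap_eq_smul_one, smul_mul_assoc, one_mul] at this
  linear_combination (norm := module) this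

namespace SpecialLinearGroup

theorem smul_smul_fin_two {R : Type*} [CommRing R] (A : SpecialLinearGroup (Fin 2) R)
    (v : Fin 2 → R) : A • A • v = (A : Matrix (Fin 2) (Fin 2) R).trace • A • v - v := by
  calc A • A • v = ((A : Matrix (Fin 2) (Fin 2) R) * A) • v := (mul_smul _ _ v).symm
    _ = _ := by rw [mul_self_fin_two, A.2, one_smul, sub_smul, one_smul, smul_assoc]; rfl

variable {K : Type*} [Field K]

theorem smul_smul_ne_self_of_smul_ne_self {A : SpecialLinearGroup (Fin 2) K}
    (htr : (A : Matrix (Fin 2) (Fin 2) K).trace ≠ 0) {p : ℙ K (Fin 2 → K)} (hp : A • p ≠ p) :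
    A • A • p ≠ p := by
  induction p using Projectivization.ind with
  | h v hv =>
    rw [Ne, ← mul_smul, smul_mk_eq_mk_iff, mul_smul, smul_smul_fin_two]
    rintro ⟨a, ha⟩
    refine hp ((smul_mk_eq_mk_iff A hv).2 ⟨(A : Matrix (Fin 2) (Fin 2) K).trace⁻¹ * (a + 1), ?_⟩)
    rw [mul_smul, add_smul, one_smul, ha, sub_add_cancel, inv_smul_smul₀ htr]

theorem map_toLin'_submodule (A : SpecialLinearGroup (Fin 2) K) (p : ℙ K (Fin 2 → K)) :
    p.submodule.map (Matrix.toLin' (A : Matrix (Fin 2) (Fin 2) K)) = (A • p).submodule := by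
  induction p using Projectivization.ind with
  | h v hv =>
    rw [smul_mk, submodule_mk, submodule_mk, Submodule.map_span, Set.image_singleton]
    rfl

end SpecialLinearGroup

end Matrix

section

variable {G H X : Type*} [Group G] [Group H] [MulAction H X] (ρ : G →* H)

theorem MonoidHom.smul_eq_self_of_closure_eq_top {S : Set G} (hS : Subgroup.closure S = ⊤)
    {x : X} (hx : ∀ s ∈ S, ρ s • x = x) (g : G) : ρ g • x = x :=
  have hle : Subgroup.closure S ≤ (MulAction.stabilizer H x).comap ρ := (Subgroup.closure_le _).2 hx
  hle (hS ▸ Subgroup.mem_top g)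

theorem MonoidHom.smul_smul_eq_self_of_normal (N : Subgroup G) [N.Normal] {x : X}
    (hx : ∀ n ∈ N, ρ n • x = x) (g : G) : ∀ n ∈ N, ρ n • ρ g • x = ρ g • x := by
  intro n hn
  have hconj : ρ n * ρ g = ρ g * ρ (g⁻¹ * n * g) := by simp only [← map_mul]; group
  rw [smul_smul, hconj, mul_smul, hx _ (by simpa using Subgroup.Normal.conj_mem ‹_› n hn g⁻¹)]

end

/-- If `G` is generated by a normal subgroup `N` together with an element `γ` with
`tr ρ(γ) = ±2`, and `ρ : G → SL₂(ℂ)` is irreducible, then the restriction of `ρ`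
to `N` is irreducible. -/
theorem irreducible_restriction_of_normal
    {G : Type*} [Group G] (N : Subgroup G) [N.Normal] (γ : G)
    (hgen : Subgroup.closure ((N : Set G) ∪ {γ}) = ⊤)
    (ρ : G →* Matrix.SpecialLinearGroup (Fin 2) ℂ)
    (htr : Matrix.trace (ρ γ : Matrix (Fin 2) (Fin 2) ℂ) = 2 ∨
           Matrix.trace (ρ γ : Matrix (Fin 2) (Fin 2) ℂ) = -2)
    (hirr : IsIrreducibleRep ρ) :
    ¬ ∃ L : Submodule ℂ (Fin 2 → ℂ), Module.finrank ℂ L = 1 ∧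
        ∀ n ∈ N, Submodule.map (Matrix.toLin' ((ρ n : Matrix (Fin 2) (Fin 2) ℂ))) L = L := by
  rintro ⟨L, hL1, hLN⟩
  have hγ_moves : ∀ q : ℙ ℂ (Fin 2 → ℂ), (∀ n ∈ N, ρ n • q = q) → ρ γ • q ≠ q := by
    refine fun q hqN hqγ ↦ hirr ⟨q.submodule, q.finrank_submodule, fun g ↦ ?_⟩
    rw [SpecialLinearGroup.map_toLin'_submodule,
      ρ.smul_eq_self_of_closure_eq_top hgen (by rintro s (hs | rfl); exacts [hqN s hs, hqγ])]
  set p := mk'' L hL1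
  have hpN : ∀ n ∈ N, ρ n • p = p := fun n hn ↦ submodule_injective <| by
    rw [← SpecialLinearGroup.map_toLin'_submodule, submodule_mk'', hLN n hn]
  have hγpN := ρ.smul_smul_eq_self_of_normal N hpN γ
  have hγγpN := ρ.smul_smul_eq_self_of_normal N hγpN γ
  have hγp := hγ_moves p hpN
  have htr0 : (ρ γ : Matrix (Fin 2) (Fin 2) ℂ).trace ≠ 0 := by
    rcases htr with h | h <;> rw [h] <;> norm_num
  have hN_trivial (n : G) (hn : n ∈ N) (q : ℙ ℂ (Fin 2 → ℂ)) : ρ n • q = q :=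
    smul_eq_self_of_three_fixed_points (finrank_fin_fun ℂ) hγp.symm
      (SpecialLinearGroup.smul_smul_ne_self_of_smul_ne_self htr0 hγp).symm
      (by rwa [Ne, smul_left_cancel_iff, eq_comm]) (hpN n hn) (hγpN n hn) (hγγpN n hn) q
  obtain ⟨q, hq⟩ : ∃ q : ℙ ℂ (Fin 2 → ℂ), ρ γ • q = q := exists_smul_eq_self _
  exact hγ_moves q (fun n hn ↦ hN_trivial n hn q) hq
end

section
/- Let c₀₁, c₀₂, c₀₃, c₁₂, c₁₃, c₂₃ and θ₀, θ₁, θ₂, θ₃ be complex numbers satisfying the Ptolemy relation c₀₁c₂₃ − c₀₂c₁₃ + c₀₃c₁₂ = 0, with c₀₁ ≠ 0. If c₁₃θ₀ − c₀₃θ₁ + c₀₁θ₃ = 0 and c₁₂θ₀ − c₀₂θ₁ + c₀₁θ₂ = 0, then also c₂₃θ₀ − c₀₃θ₂ + c₀₂θ₃ = 0 and c₂₃θ₁ − c₁₃θ₂ + c₁₂θ₃ = 0. -/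
/-- Two face equations of a tetrahedron sharing the edge `[0,1]` imply the
other two, given the Ptolemy relation and `c₀₁ ≠ 0`. -/
theorem two_face_equations_imply_other_two
    (c01 c02 c03 c12 c13 c23 θ0 θ1 θ2 θ3 : ℂ)
    (hP : c01 * c23 - c02 * c13 + c03 * c12 = 0)
    (h01 : c01 ≠ 0)
    (hE2 : c13 * θ0 - c03 * θ1 + c01 * θ3 = 0)
    (hE3 : c12 * θ0 - c02 * θ1 + c01 * θ2 = 0) :
    c23 * θ0 - c03 * θ2 + c02 * θ3 = 0 ∧
    c23 * θ1 - c13 * θ2 + c12 * θ3 = 0 := by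
  constructor
  · have h : c01 * (c23 * θ0 - c03 * θ2 + c02 * θ3) = c01 * 0 := by
      ring_nf
      linear_combination θ0 * hP + c02 * hE2 - c03 * hE3
    exact mul_left_cancel₀ h01 h
  · have h : c01 * (c23 * θ1 - c13 * θ2 + c12 * θ3) = c01 * 0 := by
      ring_nf
      linear_combination θ1 * hP + c12 * hE2 - c13 * hE3
    exact mul_left_cancel₀ h01 h
end

section
/- Let c₀, …, c₈ be nonzero complex numbers and c₉, c₁₀, c₁₁, c₁₂ complex numbers. Then the system consisting of the four Ptolemy equations c₉c₈ − c₂c₆ − c₄c₇ = 0, c₁₀c₅ + c₁c₃ + c₀c₄ = 0, c₁₁c₇ + c₂c₀ − c₃c₉ = 0, c₁₂c₄ + c₁c₆ − c₉c₁₀ = 0, together with the identification equations c₁ = c₀, c₂ = c₁, c₃ = c₂, c₁₂ = c₃, c₁₀ = c₄, c₆ = c₅, c₁₁ = c₆, c₉ = c₇, −c₀ = c₈, holds if and only if there exist c ∈ ℂ with c ≠ 0 and β ∈ ℂ with β² − 2β − 1 = 0 such that (c₀, c₁, c₂, c₃, c₄, c₅, c₆, c₇, c₈) = c·(1, 1,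 1, 1, β, 1−β, 1−β, β−2, −1) and c₉ = c₇, c₁₀ = c₄, c₁₁ = c₆, c₁₂ = c₃. -/
/-- Solutions of the Ptolemy + gluing equations for the layered triangulation of m036
(trivial boundary obstruction class). -/
theorem m036_ptolemy_solutions
    (c0 c1 c2 c3 c4 c5 c6 c7 c8 : ℂ) (c9 c10 c11 c12 : ℂ)
    (h0 : c0 ≠ 0) (h1 : c1 ≠ 0) (h2 : c2 ≠ 0) (h3 : c3 ≠ 0) (h4 : c4 ≠ 0)
    (h5 : c5 ≠ 0) (h6 : c6 ≠ 0) (h7 : c7 ≠ 0) (h8 : c8 ≠ 0) :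
    (c9 * c8 - c2 * c6 - c4 * c7 = 0 ∧
     c10 * c5 + c1 * c3 + c0 * c4 = 0 ∧
     c11 * c7 + c2 * c0 - c3 * c9 = 0 ∧
     c12 * c4 + c1 * c6 - c9 * c10 = 0 ∧
     c1 = c0 ∧ c2 = c1 ∧ c3 = c2 ∧ c12 = c3 ∧ c10 = c4 ∧
     c6 = c5 ∧ c11 = c6 ∧ c9 = c7 ∧ -c0 = c8) ↔
    (∃ c β : ℂ, c ≠ 0 ∧ β ^ 2 - 2 * β - 1 = 0 ∧
     c0 = c * 1 ∧ c1 = c * 1 ∧ c2 = c * 1 ∧ c3 = c * 1 ∧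
     c4 = c * β ∧ c5 = c * (1 - β) ∧ c6 = c * (1 - β) ∧
     c7 = c * (β - 2) ∧ c8 = c * (-1) ∧
     c9 = c7 ∧ c10 = c4 ∧ c11 = c6 ∧ c12 = c3) := by
  constructor
  · rintro ⟨e1, e2, e3, e4, i1, i2, i3, i4, i5, i6, i7, i8, i9⟩
    simp only [i8, i5, i7, i4, i3, i2, i1, i6, ← i9] at e1 e2 e3 e4
    -- now e1..e4 are in c0, c4, c5, c7
    have hc7 : c7 = -c4 - 2 * c5 := by
      have : c0 * c7 = c0 * (-c4 - 2 * c5) := by linear_combination -e1 + e4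
      exact mul_left_cancel₀ h0 this
    have hcub : (c4 + c0) * (c4 ^ 2 - 2 * c0 * c4 - c0 ^ 2) = 0 := by
      linear_combination c4 * e4 + c4 ^ 2 * hc7 - (2 * c4 + c0) * e2
    have hne : c4 + c0 ≠ 0 := by
      intro h
      apply h5
      have : c0 * c5 = 0 := by linear_combination -e2 + (c5 + c0) * h
      exact (mul_eq_zero.mp this).resolve_left h0
    have q : c4 ^ 2 - 2 * c0 * c4 - c0 ^ 2 = 0 :=
      (mul_eq_zero.mp hcub).resolve_left hne
    have hc5 : c5 = c0 - c4 := by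
      have : c0 * c5 = c0 * (c0 - c4) := by
        linear_combination e4 + c4 * hc7 - 2 * e2 - q
      exact mul_left_cancel₀ h0 this
    refine ⟨c0, c4 / c0, h0, ?_, by ring, by rw [i1]; ring, by rw [i2, i1]; ring,
      by rw [i3, i2, i1]; ring, ?_, ?_, ?_, ?_, by rw [← i9]; ring, i8, i5, i7, i4⟩
    · have hq : (c4 / c0) ^ 2 - 2 * (c4 / c0) - 1
          = (c4 ^ 2 - 2 * c0 * c4 - c0 ^ 2) / c0 ^ 2 := by
        field_simp
      rw [hq, q, zero_div]
    · field_simp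
    · rw [hc5]; field_simp
    · rw [i6, hc5]; field_simp
    · rw [hc7, hc5]; field_simp; ring
  · rintro ⟨c, β, hc, hβ, r0, r1, r2, r3, r4, r5, r6, r7, r8, r9, r10, r11, r12⟩
    subst r0 r1 r2 r3 r4 r5 r6 r7 r8 r9 r10 r11 r12
    refine ⟨by linear_combination (-c ^ 2) * hβ, by linear_combination (-c ^ 2) * hβ,
      by linear_combination (-c ^ 2) * hβ, by linear_combination (-c ^ 2) * hβ,
      rfl, rfl, rfl, rfl, rfl, rfl, rfl, rfl, by ring⟩
end

section
/- Let c₀, …, c₈ be nonzero complex numbers and c₉, c₁₀, c₁₁, c₁₂ complex numbers. Then the system consisting of the four sign-deformed Ptolemy equations c₉c₈ + c₂c₆ − c₄c₇ = 0, c₁₀c₅ + c₁c₃ − c₀c₄ = 0, c₁₁c₇ − c₂c₀ − c₃c₉ = 0, c₁₂c₄ + c₁c₆ − c₉c₁₀ = 0, together with the identification equations c₁ = c₀, c₂ = c₁, c₃ = c₂, c₁₂ = c₃, c₁₀ = c₄, c₆ = c₅, c₁₁ = c₆, c₉ = c₇, −c₀ = c₈, holds if and only if there exist c ∈ ℂ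 with c ≠ 0 and α ∈ ℂ with α³ + α² + α − 1 = 0 such that (c₀, c₁, c₂, c₃, c₄, c₅, c₆, c₇, c₈) = c·(1, 1, 1, 1, α, −α−α², −α−α², −α, −1) and c₉ = c₇, c₁₀ = c₄, c₁₁ = c₆, c₁₂ = c₃. -/
/-!
The gluing equations collapse the thirteen Ptolemy coordinates to four, `a, x, y, z`.
Adding the second and third Ptolemy equations gives `(z + x) (y - a) = 0`, and `y = a` would
force `a = 0`, so `z = -x`. Writing `x = a α`, the fourth equation then determines `y`, and the
second becomes `a² (α³ + α² + α - 1) = 0`.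
-/

namespace M036

variable {K : Type*} [Field K]

/-- The sign-deformed Ptolemy equations after the identifications
`a = c₀ = c₁ = c₂ = c₃ = c₁₂`, `x = c₄ = c₁₀`, `y = c₅ = c₆ = c₁₁`, `z = c₇ = c₉`, `c₈ = -a`. -/
def ReducedPtolemy (a x y z : K) : Prop :=
  z * -a + a * y - x * z = 0 ∧ x * y + a * a - a * x = 0 ∧
    y * z - a * a - a * z = 0 ∧ a * x + a * y - z * x = 0

theorem reducedPtolemy_iff {a x y z : K} (ha : a ≠ 0) :
    ReducedPtolemy a x y z ↔
      ∃ α : K, α ^ 3 + α ^ 2 + α - 1 = 0 ∧ x = a * α ∧ y = a * (-α - α ^ 2) ∧ z = a * -α := by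
  constructor
  · rintro ⟨-, e2, e3, e4⟩
    have hya : y - a ≠ 0 := fun h ↦ ha <| mul_self_eq_zero.mp (by linear_combination e2 - x * h)
    have hz : z = -x := by
      have : (z + x) * (y - a) = 0 := by linear_combination e3 + e2
      linear_combination (mul_eq_zero.mp this).resolve_right hya
    obtain ⟨α, rfl⟩ : ∃ α, x = a * α := ⟨x / a, by field_simp⟩
    subst hz
    have hy : y = a * (-α - α ^ 2) := mul_left_cancel₀ ha (by linear_combination e4)
    subst hy
    have hα : a ^ 2 * (α ^ 3 + α ^ 2 + α - 1) = 0 := by linear_combination -e2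
    exact ⟨α, (mul_eq_zero.mp hα).resolve_left (pow_ne_zero 2 ha), rfl, rfl, by ring⟩
  · rintro ⟨α, hα, rfl, rfl, rfl⟩
    exact ⟨by ring, by linear_combination (-a ^ 2) * hα, by linear_combination a ^ 2 * hα, by ring⟩

end M036

open M036 in
theorem m036_sign_deformed_ptolemy_solutions_general
    (c0 c1 c2 c3 c4 c5 c6 c7 c8 : ℂ) (c9 c10 c11 c12 : ℂ)
    (h0 : c0 ≠ 0) :
    (c9 * c8 + c2 * c6 - c4 * c7 = 0 ∧
     c10 * c5 + c1 * c3 - c0 * c4 = 0 ∧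
     c11 * c7 - c2 * c0 - c3 * c9 = 0 ∧
     c12 * c4 + c1 * c6 - c9 * c10 = 0 ∧
     c1 = c0 ∧ c2 = c1 ∧ c3 = c2 ∧ c12 = c3 ∧ c10 = c4 ∧
     c6 = c5 ∧ c11 = c6 ∧ c9 = c7 ∧ -c0 = c8) ↔
    (∃ c α : ℂ, c ≠ 0 ∧ α ^ 3 + α ^ 2 + α - 1 = 0 ∧
     c0 = c * 1 ∧ c1 = c * 1 ∧ c2 = c * 1 ∧ c3 = c * 1 ∧
     c4 = c * α ∧ c5 = c * (-α - α ^ 2) ∧ c6 = c * (-α - α ^ 2) ∧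
     c7 = c * (-α) ∧ c8 = c * (-1) ∧
     c9 = c7 ∧ c10 = c4 ∧ c11 = c6 ∧ c12 = c3) := by
  constructor
  · rintro ⟨e1, e2, e3, e4, rfl, rfl, rfl, rfl, rfl, rfl, rfl, rfl, rfl⟩
    obtain ⟨α, hα, rfl, rfl, rfl⟩ := (reducedPtolemy_iff h0).mp ⟨e1, e2, e3, e4⟩
    exact ⟨_, α, h0, hα, by simp⟩
  · rintro ⟨c, α, hc, hα, rfl, rfl, rfl, rfl, rfl, rfl, rfl, rfl, rfl, rfl, rfl, rfl, rfl⟩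
    obtain ⟨e1, e2, e3, e4⟩ := (reducedPtolemy_iff hc).mpr ⟨α, hα, rfl, rfl, rfl⟩
    exact ⟨by linear_combination e1, by linear_combination e2, by linear_combination e3,
      by linear_combination e4, rfl, rfl, rfl, rfl, rfl, rfl, rfl, rfl, by ring⟩

/-- Solutions of the sign-deformed Ptolemy + gluing equations for the layered
triangulation of m036 (boundary obstruction class covering geometric lifts). -/
theorem m036_sign_deformed_ptolemy_solutions
    (c0 c1 c2 c3 c4 c5 c6 c7 c8 : ℂ) (c9 c10 c11 c12 : ℂ)
    (h0 : c0 ≠ 0) (h1 : c1 ≠ 0) (h2 : c2 ≠ 0) (h3 : c3 ≠ 0) (h4 : c4 ≠ 0)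
    (h5 : c5 ≠ 0) (h6 : c6 ≠ 0) (h7 : c7 ≠ 0) (h8 : c8 ≠ 0) :
    (c9 * c8 + c2 * c6 - c4 * c7 = 0 ∧
     c10 * c5 + c1 * c3 - c0 * c4 = 0 ∧
     c11 * c7 - c2 * c0 - c3 * c9 = 0 ∧
     c12 * c4 + c1 * c6 - c9 * c10 = 0 ∧
     c1 = c0 ∧ c2 = c1 ∧ c3 = c2 ∧ c12 = c3 ∧ c10 = c4 ∧
     c6 = c5 ∧ c11 = c6 ∧ c9 = c7 ∧ -c0 = c8) ↔
    (∃ c α : ℂ, c ≠ 0 ∧ α ^ 3 + α ^ 2 + α - 1 = 0 ∧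
     c0 = c * 1 ∧ c1 = c * 1 ∧ c2 = c * 1 ∧ c3 = c * 1 ∧
     c4 = c * α ∧ c5 = c * (-α - α ^ 2) ∧ c6 = c * (-α - α ^ 2) ∧
     c7 = c * (-α) ∧ c8 = c * (-1) ∧
     c9 = c7 ∧ c10 = c4 ∧ c11 = c6 ∧ c12 = c3) :=
  m036_sign_deformed_ptolemy_solutions_general c0 c1 c2 c3 c4 c5 c6 c7 c8 c9 c10 c11 c12 h0
end

section
/- Let α ∈ ℂ satisfy α³ + α² + α − 1 = 0 and set (c₀, …, c₈) = (1, 1, 1, 1, α, −α−α², −α−α², −α, −1), c₉ = −α, c₁₀ = α, c₁₁ = −α−α², c₁₂ = 1. Define the linear map L : ℂ⁶ → ℂ⁶ sending (θ₀, …, θ₅) to (θ₉, θ₁₂, θ₁₀, θ₂, θ₁₃, θ₁₁), where θ₆ = (c₆θ₅ + c₄θ₀)/c₉, θ₇ = (c₇θ₅ + c₂θ₀)/c₉, θ₈ = (c₃θ₄ + c₀θ₃)/c₁₀, θ₉ = (c₄θ₄ + c₁θ₃)/c₁₀, θ₁₀ = (−c₀θ₁ + c₆θ₅ + c₄θ₀)/c₁₁,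 θ₁₁ = (c₃c₉θ₁ + c₂c₆θ₅ + c₂c₄θ₀)/(c₁₁c₉), θ₁₂ = −(c₆c₇θ₅ + c₂c₆θ₀ + c₃c₉θ₄ + c₀c₉θ₃)/(c₁₂c₉), θ₁₃ = −(c₁₀c₇θ₅ + c₁₀c₂θ₀ + c₁c₃θ₄ + c₀c₁θ₃)/(c₁₀c₁₂). Then the 6×6 matrix of L satisfies det(t·I₆ − L) = t⁶ + (2α²+2α+2)t⁵ + (α²+2α+4)t⁴ + (2α²+4α+2)t³ + (α²+2α+4)t² + (2α²+2α+2)t + 1 for all t ∈ ℂ. -/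
/-!
The top face variables are linear in the bottom ones, and the Jacobian `∂θ′ᵢ/∂θⱼ` has entries
in `α`, `α⁻¹` and `(1 + α)⁻¹` only. Modulo the cubic, `α (α² + α + 1) = 1` and
`(1 + α) (α² + 1) = 2`, so both are invertible away from characteristic `2`. Expanding
`det (t • 1 - ∂θ′/∂θ)` and clearing the denominator `α² (1 + α)²`, the difference of the two sides becomes
a polynomial multiple of `α³ + α² + α - 1`.
-/

open Matrix

namespace M036

variable {K : Type*} [Field K] {α : K}

/-- The super-Ptolemy variables `(θ₉, θ₁₂, θ₁₀, θ₂, θ₁₃, θ₁₁)` on the top surface, with the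
`c`-values of the sign-deformed Ptolemy solution at scale `1`. -/
def topFaceVariables (α : K) (θ : Fin 6 → K) : Fin 6 → K :=
  let c0 : K := 1; let c1 : K := 1; let c2 : K := 1; let c3 : K := 1
  let c4 : K := α; let c6 : K := -α - α ^ 2; let c7 : K := -α
  let c9 : K := -α; let c10 : K := α; let c11 : K := -α - α ^ 2; let c12 : K := 1
  let θ9 : K := (c4 * θ 4 + c1 * θ 3) / c10
  let θ10 : K := (-(c0 * θ 1) + c6 * θ 5 + c4 * θ 0) / c11
  let θ11 : K := (c3 * c9 * θ 1 + c2 * c6 * θ 5 + c2 * c4 * θ 0) / (c11 * c9)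
  let θ12 : K := -((c6 * c7 * θ 5 + c2 * c6 * θ 0 + c3 * c9 * θ 4 + c0 * c9 * θ 3) / (c12 * c9))
  let θ13 : K := -((c10 * c7 * θ 5 + c10 * c2 * θ 0 + c1 * c3 * θ 4 + c0 * c1 * θ 3) / (c10 * c12))
  ![θ9, θ12, θ10, θ 2, θ13, θ11]

def monodromyMatrix (α : K) : Matrix (Fin 6) (Fin 6) K :=
  !![0, 0, 0, α⁻¹, 1, 0;
     -1 - α, 0, 0, -1, -1, α + α ^ 2;
     -(1 + α)⁻¹, (α * (1 + α))⁻¹, 0, 0, 0, 1;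
     0, 0, 1, 0, 0, 0;
     -1, 0, 0, -α⁻¹, -α⁻¹, α;
     (α * (1 + α))⁻¹, -(α * (1 + α))⁻¹, 0, 0, 0, -α⁻¹]

theorem topFaceVariables_eq_mulVec (hα₀ : α ≠ 0) (hα₁ : 1 + α ≠ 0) (θ : Fin 6 → K) :
    topFaceVariables α θ = monodromyMatrix α *ᵥ θ := by
  have hα₁' : -1 - α ≠ 0 := by rw [← neg_add']; exact neg_ne_zero.mpr hα₁
  ext i
  fin_cases i <;>
    simp [topFaceVariables, monodromyMatrix, mulVec, dotProduct, Fin.sum_univ_succ] <;>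
    field_simp <;> ring

theorem ne_zero_of_cubic (hα : α ^ 3 + α ^ 2 + α - 1 = 0) : α ≠ 0 :=
  left_ne_zero_of_mul_eq_one (b := α ^ 2 + α + 1) (by linear_combination hα)

theorem one_add_ne_zero_of_cubic [NeZero (2 : K)] (hα : α ^ 3 + α ^ 2 + α - 1 = 0) :
    1 + α ≠ 0 := by
  have h : (1 + α) * (α ^ 2 + 1) = 2 := by linear_combination hα
  exact left_ne_zero_of_mul (h ▸ two_ne_zero)

theorem det_smul_one_sub_monodromyMatrix [NeZero (2 : K)] (hα : α ^ 3 + α ^ 2 + α - 1 = 0)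
    (t : K) :
    (t • (1 : Matrix (Fin 6) (Fin 6) K) - monodromyMatrix α).det =
      t ^ 6 + (2 * α ^ 2 + 2 * α + 2) * t ^ 5 + (α ^ 2 + 2 * α + 4) * t ^ 4
        + (2 * α ^ 2 + 4 * α + 2) * t ^ 3 + (α ^ 2 + 2 * α + 4) * t ^ 2
        + (2 * α ^ 2 + 2 * α + 2) * t + 1 := by
  have hα₀ := ne_zero_of_cubic hα
  have hα₁ := one_add_ne_zero_of_cubic hα
  simp only [monodromyMatrix, det_succ_row_zero, Fin.sum_univ_succ, submatrix_apply,
    Fin.zero_succAbove, Fin.succ_succAbove_zero, Fin.succ_succAbove_succ, det_unique,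
    Fin.default_eq_zero, Fin.val_zero, Fin.val_succ, Finset.univ_unique, Finset.sum_singleton,
    Matrix.sub_apply, Matrix.smul_apply, one_apply, Fin.succ_inj, Fin.succ_ne_zero,
    (Fin.succ_ne_zero _).symm, if_true, if_false, smul_eq_mul, mul_one, mul_zero, of_apply,
    cons_val_succ, cons_val_zero]
  ring_nf
  field_simp
  linear_combination -(2 * α ^ 3 * (α + 1) ^ 2 * t ^ 5 + α ^ 2 * (α + 1) ^ 3 * t ^ 4
    + 2 * α ^ 3 * (α + 1) * (α + 2) * t ^ 3 + α ^ 2 * (α + 1) * (α ^ 2 + 2 * α + 3) * t ^ 2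
    + 2 * α * (α ^ 4 + 2 * α ^ 3 + α ^ 2 + α + 1) * t + α ^ 3 + α ^ 2 - α + 1) * hα

end M036

/-- The C²-torsion polynomial of m036 at the sign-deformed Ptolemy solution
(boundary obstruction class covering lifts of the geometric representation). -/
theorem m036_C2_torsion_geometric_class (α : ℂ) (hα : α ^ 3 + α ^ 2 + α - 1 = 0)
    (L : (Fin 6 → ℂ) →ₗ[ℂ] (Fin 6 → ℂ))
    (hL : ∀ θ : Fin 6 → ℂ,
      let c0 : ℂ := 1; let c1 : ℂ := 1; let c2 : ℂ := 1; let c3 : ℂ := 1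
      let c4 : ℂ := α; let c5 : ℂ := -α - α ^ 2; let c6 : ℂ := -α - α ^ 2
      let c7 : ℂ := -α; let c8 : ℂ := -1
      let c9 : ℂ := -α; let c10 : ℂ := α; let c11 : ℂ := -α - α ^ 2; let c12 : ℂ := 1
      let θ6 : ℂ := (c6 * θ 5 + c4 * θ 0) / c9
      let θ7 : ℂ := (c7 * θ 5 + c2 * θ 0) / c9
      let θ8 : ℂ := (c3 * θ 4 + c0 * θ 3) / c10
      let θ9 : ℂ := (c4 * θ 4 + c1 * θ 3) / c10
      let θ10 : ℂ := (-(c0 * θ 1) + c6 * θ 5 + c4 * θ 0) / c11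
      let θ11 : ℂ := (c3 * c9 * θ 1 + c2 * c6 * θ 5 + c2 * c4 * θ 0) / (c11 * c9)
      let θ12 : ℂ := -((c6 * c7 * θ 5 + c2 * c6 * θ 0 + c3 * c9 * θ 4 + c0 * c9 * θ 3) / (c12 * c9))
      let θ13 : ℂ := -((c10 * c7 * θ 5 + c10 * c2 * θ 0 + c1 * c3 * θ 4 + c0 * c1 * θ 3) / (c10 * c12))
      L θ = ![θ9, θ12, θ10, θ 2, θ13, θ11]) :
    ∀ t : ℂ,
      (t • (1 : Matrix (Fin 6) (Fin 6) ℂ) - LinearMap.toMatrix' L).det =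
        t ^ 6 + (2 * α ^ 2 + 2 * α + 2) * t ^ 5 + (α ^ 2 + 2 * α + 4) * t ^ 4
          + (2 * α ^ 2 + 4 * α + 2) * t ^ 3 + (α ^ 2 + 2 * α + 4) * t ^ 2
          + (2 * α ^ 2 + 2 * α + 2) * t + 1 := by
  intro t
  have hL' : L = Matrix.toLin' (M036.monodromyMatrix α) := LinearMap.ext fun θ =>
    (hL θ).trans (M036.topFaceVariables_eq_mulVec (M036.ne_zero_of_cubic hα)
      (M036.one_add_ne_zero_of_cubic hα) θ)
  rw [hL', LinearMap.toMatrix'_toLin']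
  exact M036.det_smul_one_sub_monodromyMatrix hα t
end
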